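/- Consider the hybrid-cloud scheduling instance constructed in the NP-hardness reduction: three stages in a chain (stage 1, then stage 2, then stage 3), one replica per stage ($I_k = 1$ for $k = 1,2,3$), $n$ jobs with private processing times $P^{private}_{k,j} \geq 0$, public-cloud execution cost $H_{k,j} = 1$ for every stage $k$ and job $j$, and budget $B = 0$. Then: (a) any schedule in which the total public-cloud cost $\sum_{k,j} (1 - e_{k,j}) H_{k,j}$ is at most $0$ (with each $e_{k,j} \in \{0,1\}$ indicating private execution) must have $e_{k,j} = 1$ for all $k, j$, i.e., every stage of every job executes in the private cloud; and (b) such a schedule with makespan at most $C_{max}$ exists if and only if the three-machine flow shop instance $F3\|C_{max}$ with processing time of job $j$ on machine $k$ equal to $P^{private}_{k,j}$ admits a schedule with makespan at most $C_{max}$ — that is, start times $s_{k,j} \geq 0$ with $s_{2,j} \geq s_{1,j} + P^{private}_{1,j}$ and $s_{3,j} \geq s_{2,j} + P^{private}_{2,j}$ for every job $j$, with the execution intervals $[s_{k,j}, s_{k,j} + P^{private}_{k,j})$ of distinct jobs on each machine $k$ pairwise disjoint, and $s_{3,j} + P^{private}_{3,j} \leq C_{max}$ for every job $j$. -/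
import Mathlib


/-- The NP-hardness reduction instance: three stages in a chain, one replica
per stage, public cost `H k j = 1` for every stage and job, budget `B = 0`.
(a) Any binary placement `e` with total public-cloud cost at most `0` executes
every stage of every job privately.
(b) A schedule of cost at most `0` and makespan at most `Cmax` exists iff the
three-machine flow shop instance with processing times `Ppriv` admits a
schedule of makespan at most `Cmax`. -/
theorem np_hardness_reduction
    (n : ℕ) (Ppriv Ppub : Fin 3 → Fin n → ℝ)
    (hPpriv : ∀ k j, 0 ≤ Ppriv k j) (hPpub : ∀ k j, 0 < Ppub k j)
    (Cmax : ℝ) :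
    -- (a) total public cost ≤ B = 0 forces all-private execution
    ((∀ e : Fin 3 → Fin n → ℝ,
        (∀ k j, e k j = 0 ∨ e k j = 1) →
        (∑ k : Fin 3, ∑ j : Fin n, (1 - e k j) * 1) ≤ 0 →
        ∀ k j, e k j = 1) ∧
    -- (b) equivalence with the flow shop F3‖Cmax instance
    ((∃ (e : Fin 3 → Fin n → ℝ) (s : Fin 3 → Fin n → ℝ),
        (∀ k j, e k j = 0 ∨ e k j = 1) ∧
        (∑ k : Fin 3, ∑ j : Fin n, (1 - e k j) * 1) ≤ 0 ∧
        (∀ k j, 0 ≤ s k j) ∧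
        -- chain precedence: stage 1 then 2 then 3, with duration depending on placement
        (∀ j, s 1 j ≥ s 0 j +
          (e 0 j * Ppriv 0 j + (1 - e 0 j) * Ppub 0 j)) ∧
        (∀ j, s 2 j ≥ s 1 j +
          (e 1 j * Ppriv 1 j + (1 - e 1 j) * Ppub 1 j)) ∧
        -- each of the single private replicas runs one job at a time
        (∀ k : Fin 3, ∀ j j' : Fin n, j ≠ j' → e k j = 1 → e k j' = 1 →
          Disjoint (Set.Ico (s k j) (s k j + Ppriv k j))
                   (Set.Ico (s k j') (s k j' + Ppriv k j'))) ∧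
        -- all executions finish by the deadline
        (∀ k j, s k j +
          (e k j * Ppriv k j + (1 - e k j) * Ppub k j) ≤ Cmax)) ↔
      (∃ s : Fin 3 → Fin n → ℝ,
        (∀ k j, 0 ≤ s k j) ∧
        (∀ j, s 1 j ≥ s 0 j + Ppriv 0 j) ∧
        (∀ j, s 2 j ≥ s 1 j + Ppriv 1 j) ∧
        (∀ k : Fin 3, ∀ j j' : Fin n, j ≠ j' →
          Disjoint (Set.Ico (s k j) (s k j + Ppriv k j))
                   (Set.Ico (s k j') (s k j' + Ppriv k j'))) ∧
        (∀ j, s 2 j + Ppriv 2 j ≤ Cmax)))) := by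
  have key : ∀ e : Fin 3 → Fin n → ℝ,
      (∀ k j, e k j = 0 ∨ e k j = 1) →
      (∑ k : Fin 3, ∑ j : Fin n, (1 - e k j) * 1) ≤ 0 →
      ∀ k j, e k j = 1 := by
    intro e he hsum k j
    have hterm : ∀ x ∈ (Finset.univ : Finset (Fin 3)),
        0 ≤ ∑ j : Fin n, (1 - e x j) * 1 := by
      intro x _
      refine Finset.sum_nonneg fun j' _ => ?_
      rcases he x j' with h | h <;> simp [h]
    have hall := (Finset.sum_eq_zero_iff_of_nonneg hterm).1
      (le_antisymm hsum (Finset.sum_nonneg hterm))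
    have hinner := hall k (Finset.mem_univ k)
    have hterm2 : ∀ j' ∈ (Finset.univ : Finset (Fin n)),
        0 ≤ (1 - e k j') * 1 := by
      intro j' _; rcases he k j' with h | h <;> simp [h]
    have := (Finset.sum_eq_zero_iff_of_nonneg hterm2).1 hinner j (Finset.mem_univ j)
    rcases he k j with h | h
    · simp [h] at this
    · exact h
  refine ⟨key, ?_⟩
  constructor
  · rintro ⟨e, s, he, hcost, hs0, h12, h23, hdisj, hdead⟩
    have hone : ∀ k j, e k j = 1 := key e he hcost
    refine ⟨s, hs0, ?_, ?_, ?_, ?_⟩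
    · intro j; have := h12 j; simpa [hone] using this
    · intro j; have := h23 j; simpa [hone] using this
    · intro k j j' hjj'; exact hdisj k j j' hjj' (hone k j) (hone k j')
    · intro j; have := hdead 2 j; simpa [hone] using this
  · rintro ⟨s, hs0, h12, h23, hdisj, hdead⟩
    refine ⟨fun _ _ => 1, s, fun _ _ => Or.inr rfl, by simp, hs0, ?_, ?_, ?_, ?_⟩
    · intro j; simpa using h12 j
    · intro j; simpa using h23 j
    · intro k j j' hjj' _ _; exact hdisj k j j' hjj'
    · intro k j
      simp only [one_mul, sub_self, zero_mul, add_zero]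
      have h2 := hdead j
      fin_cases k
      · calc s 0 j + Ppriv 0 j ≤ s 1 j := h12 j
          _ ≤ s 1 j + Ppriv 1 j := le_add_of_nonneg_right (hPpriv 1 j)
          _ ≤ s 2 j := h23 j
          _ ≤ s 2 j + Ppriv 2 j := le_add_of_nonneg_right (hPpriv 2 j)
          _ ≤ Cmax := h2
      · calc s 1 j + Ppriv 1 j ≤ s 2 j := h23 j
          _ ≤ s 2 j + Ppriv 2 j := le_add_of_nonneg_right (hPpriv 2 j)
          _ ≤ Cmax := h2
      · exact h2
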